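/- For every θ ∈ L_p(μ;X), the measure μ_θ^Mart belongs to M_p(μ) and satisfies W_p^Mart(μ, μ_θ^Mart)² ≤ ‖θ‖²_{L_p(μ;X)}; consequently I^Mart_Θ(h)f ≤ I^Mart(h)f for every Θ ⊆ L_p(μ;X), h > 0, and f ∈ Lip_p. -/

import Mathlib

/-!
Couple `μ` with `μ_θ^Mart` by moving each `y` to `y + θ(y)` or to `y - θ(y)` with probability
`1/2` each. The two moves average to `y`, so this is a martingale coupling, and both have length
`‖θ(y)‖`, so its `p`-cost is `‖θ‖_{L_p}^p`; hence `W_p^Mart(μ, μ_θ^Mart) ≤ ‖θ‖_{L_p}`. Since `φ_h`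
is nondecreasing, each term of the supremum defining `I^Mart_Θ(h) f` is then dominated by the term
of `I^Mart(h) f` at `ν = μ_θ^Mart`.
-/

open MeasureTheory Filter Set
open scoped Topology ENNReal NNReal RealInnerProductSpace

noncomputable section

variable {X : Type*} [NormedAddCommGroup X] [InnerProductSpace ℝ X]
  [SecondCountableTopology X] [CompleteSpace X] [MeasurableSpace X] [BorelSpace X]

/-- `π` is a coupling of `μ` and `ν`. -/
def IsCoupling (μ ν : Measure X) (π : Measure (X × X)) : Prop :=
  π.map Prod.fst = μ ∧ π.map Prod.snd = ν

/-- The `p`-Wasserstein distance between `μ` and `ν` (valued in `ℝ≥0∞`). -/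
def Wp (p : ℝ) (μ ν : Measure X) : ℝ≥0∞ :=
  (⨅ π ∈ {π : Measure (X × X) | IsCoupling μ ν π},
    ∫⁻ q, (‖q.1 - q.2‖₊ : ℝ≥0∞) ^ p ∂π) ^ (1 / p)

/-- Borel probability measures with finite `p`-th moment. -/
def Pp (p : ℝ) : Set (Measure X) :=
  {ν | IsProbabilityMeasure ν ∧ ∫⁻ x, (‖x‖₊ : ℝ≥0∞) ^ p ∂ν < ⊤}

/-- The rescaled penalty function `φ_h(v) = h·φ(v/h)`. -/
def phih (φ : ℝ → ℝ≥0∞) (h v : ℝ) : ℝ≥0∞ := ENNReal.ofReal h * φ (v / h)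

/-- The risk functional `I(h) f`. -/
def Ifun (μ : Measure X) (φ : ℝ → ℝ≥0∞) (p h : ℝ) (f : X → ℝ) : EReal :=
  ⨆ ν ∈ Pp (X := X) p,
    ((∫ x, f x ∂ν : ℝ) : EReal) - ((phih φ h (Wp p μ ν).toReal : ℝ≥0∞) : EReal)

/-- The `L_p(μ; X)` norm of a vector field. -/
def lpnorm (μ : Measure X) (p : ℝ) (θ : X → X) : ℝ := (∫ y, ‖θ y‖ ^ p ∂μ) ^ (1 / p)

/-- The parametric risk functional `I_Θ(h) f`, where `μ_θ` is the pushforward of `μ`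
under `y ↦ y + θ(y)`. -/
def ITheta (μ : Measure X) (φ : ℝ → ℝ≥0∞) (p : ℝ) (Θ : Set (X → X)) (h : ℝ)
    (f : X → ℝ) : EReal :=
  ⨆ θ ∈ Θ, ((∫ x, f x ∂(μ.map fun y => y + θ y) : ℝ) : EReal)
    - ((phih φ h (lpnorm μ p θ) : ℝ≥0∞) : EReal)

/-- Membership in `Lip_p`. -/
def MemLipP (p : ℝ) (f : X → ℝ) : Prop :=
  ∃ L : ℝ, 0 ≤ L ∧ ∀ x₁ x₂ : X,
    |f x₁ - f x₂| ≤ L * (1 + max ‖x₁‖ ‖x₂‖) ^ (p - 1) * ‖x₁ - x₂‖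

/-- The local Lipschitz constant `|f|_Lip`. -/
def locLip (f : X → ℝ) (x : X) : ℝ :=
  limsup (fun h : ℝ =>
      sSup ((fun u : X => (f (x + h • u) - f x) / h) '' {u : X | ‖u‖ = 0 ∨ ‖u‖ = 1}))
    (𝓝[>] (0 : ℝ))

/-- `v` is a measurable direction of steepest ascent for `f`. -/
def SteepestAscent (f : X → ℝ) (v : X → X) : Prop :=
  Measurable v ∧ ∀ x : X, (‖v x‖ = 0 ∨ ‖v x‖ = 1) ∧
    Tendsto (fun h : ℝ => (f (x + h • v x) - f x) / h) (𝓝[>] (0 : ℝ)) (𝓝 (locLip f x))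

/-- The convex conjugate `φ*` of the penalty function. -/
def phiStar (φ : ℝ → ℝ≥0∞) (u : ℝ) : EReal :=
  ⨆ v ∈ Ici (0 : ℝ), ((u * v : ℝ) : EReal) - ((φ v : ℝ≥0∞) : EReal)

/-- `π` is a martingale coupling of `μ` and `ν`. -/
def IsMartCoupling (μ ν : Measure X) (π : Measure (X × X)) : Prop :=
  IsCoupling μ ν π ∧ ∀ B : Set X, MeasurableSet B →
    ∫ q, Set.indicator B (fun _ => (1 : ℝ)) q.1 • q.2 ∂π
      = ∫ y, Set.indicator B (fun _ => (1 : ℝ)) y • y ∂μ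

/-- Measures in `P_p` admitting a martingale coupling with `μ`. -/
def Mp (p : ℝ) (μ : Measure X) : Set (Measure X) :=
  {ν | ν ∈ Pp (X := X) p ∧ ∃ π : Measure (X × X), IsMartCoupling μ ν π}

/-- The `p`-martingale Wasserstein distance. -/
def WpMart (p : ℝ) (μ ν : Measure X) : ℝ≥0∞ :=
  (⨅ π ∈ {π : Measure (X × X) | IsMartCoupling μ ν π},
    ∫⁻ q, (‖q.2 - q.1‖₊ : ℝ≥0∞) ^ p ∂π) ^ (1 / p)

/-- The martingale-constrained risk functional `I^Mart(h) f`. -/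
def IMart (μ : Measure X) (φ : ℝ → ℝ≥0∞) (p h : ℝ) (f : X → ℝ) : EReal :=
  ⨆ ν ∈ Mp p μ, ((∫ x, f x ∂ν : ℝ) : EReal)
    - ((phih φ h ((WpMart p μ ν).toReal ^ 2) : ℝ≥0∞) : EReal)

/-- The randomized perturbation `μ_θ^Mart`, satisfying
`∫ f dμ_θ^Mart = ∫ (f(y+θ(y)) + f(y-θ(y)))/2 μ(dy)`. -/
def muMart (μ : Measure X) (θ : X → X) : Measure X :=
  (2 : ℝ≥0∞)⁻¹ • μ.map (fun y => y + θ y) + (2 : ℝ≥0∞)⁻¹ • μ.map (fun y => y - θ y)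

/-- The parametric martingale risk functional `I^Mart_Θ(h) f`. -/
def IMartTheta (μ : Measure X) (φ : ℝ → ℝ≥0∞) (p : ℝ) (Θ : Set (X → X)) (h : ℝ)
    (f : X → ℝ) : EReal :=
  ⨆ θ ∈ Θ, ((∫ x, f x ∂(muMart μ θ) : ℝ) : EReal)
    - ((phih φ h (lpnorm μ p θ ^ 2) : ℝ≥0∞) : EReal)

/-- Membership in `C²_p`: twice continuously Fréchet differentiable with Hessian growing
at most like `C(1+‖x‖)^{p-2}`. -/
def MemC2p (p : ℝ) (f : X → ℝ) : Prop :=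
  ContDiff ℝ 2 f ∧ ∃ C : ℝ, 0 ≤ C ∧
    ∀ x : X, ‖fderiv ℝ (fun y => gradient f y) x‖ ≤ C * (1 + ‖x‖) ^ (p - 2)

/-- `|∇²f(x)|_Max = sup_{‖w‖ ≤ 1} ⟪w, ∇²f(x) w⟫`. -/
def hessMax (f : X → ℝ) (x : X) : ℝ :=
  sSup ((fun w : X => ⟪w, fderiv ℝ (fun y => gradient f y) x w⟫) '' {w : X | ‖w‖ ≤ 1})

variable {E : Type*} [NormedAddCommGroup E] [MeasurableSpace E]

def muMartCoupling (μ : Measure E) (θ : E → E) : Measure (E × E) :=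
  (2 : ℝ≥0∞)⁻¹ • μ.map (fun y => (y, y + θ y)) + (2 : ℝ≥0∞)⁻¹ • μ.map (fun y => (y, y - θ y))

section MuMartCoupling

variable [BorelSpace E] [SecondCountableTopology E] {μ : Measure E} {θ : E → E}

theorem aemeasurable_pair_add (hθ : AEMeasurable θ μ) : AEMeasurable (fun y => (y, y + θ y)) μ :=
  by fun_prop

theorem aemeasurable_pair_sub (hθ : AEMeasurable θ μ) : AEMeasurable (fun y => (y, y - θ y)) μ :=
  by fun_prop

theorem map_fst_muMartCoupling (hθ : AEMeasurable θ μ) :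
    (muMartCoupling μ θ).map Prod.fst = μ := by
  rw [muMartCoupling, Measure.map_add _ _ measurable_fst, Measure.map_smul, Measure.map_smul,
    AEMeasurable.map_map_of_aemeasurable measurable_fst.aemeasurable
      (aemeasurable_pair_add hθ),
    AEMeasurable.map_map_of_aemeasurable measurable_fst.aemeasurable
      (aemeasurable_pair_sub hθ)]
  change (2 : ℝ≥0∞)⁻¹ • μ.map id + (2 : ℝ≥0∞)⁻¹ • μ.map id = μ
  rw [Measure.map_id, ← add_smul, ENNReal.inv_two_add_inv_two, one_smul]

theorem map_snd_muMartCoupling (hθ : AEMeasurable θ μ) :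
    (muMartCoupling μ θ).map Prod.snd = muMart μ θ := by
  rw [muMartCoupling, Measure.map_add _ _ measurable_snd, Measure.map_smul, Measure.map_smul,
    AEMeasurable.map_map_of_aemeasurable measurable_snd.aemeasurable
      (aemeasurable_pair_add hθ),
    AEMeasurable.map_map_of_aemeasurable measurable_snd.aemeasurable
      (aemeasurable_pair_sub hθ)]
  rfl

theorem lintegral_muMartCoupling (hθ : AEMeasurable θ μ) {F : E × E → ℝ≥0∞}
    (hF : Measurable F) :
    ∫⁻ q, F q ∂muMartCoupling μ θ
      = 2⁻¹ * ∫⁻ y, F (y, y + θ y) ∂μ + 2⁻¹ * ∫⁻ y, F (y, y - θ y) ∂μ := by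
  rw [muMartCoupling, lintegral_add_measure, lintegral_smul_measure, lintegral_smul_measure,
    lintegral_map' hF.aemeasurable (aemeasurable_pair_add hθ),
    lintegral_map' hF.aemeasurable (aemeasurable_pair_sub hθ)]
  rfl

theorem integral_muMartCoupling [NormedSpace ℝ E] (hθ : AEMeasurable θ μ) {F : E × E → E}
    (hF : Measurable F) (hF_add : Integrable (fun y => F (y, y + θ y)) μ)
    (hF_sub : Integrable (fun y => F (y, y - θ y)) μ) :
    ∫ q, F q ∂muMartCoupling μ θ
      = (2 : ℝ)⁻¹ • (∫ y, F (y, y + θ y) ∂μ + ∫ y, F (y, y - θ y) ∂μ) := by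
  have hFs_add := hF.aestronglyMeasurable (μ := μ.map (fun y => (y, y + θ y)))
  have hFs_sub := hF.aestronglyMeasurable (μ := μ.map (fun y => (y, y - θ y)))
  rw [muMartCoupling, integral_add_measure
      (((integrable_map_measure hFs_add (aemeasurable_pair_add hθ)).mpr hF_add).smul_measure
        (by simp))
      (((integrable_map_measure hFs_sub (aemeasurable_pair_sub hθ)).mpr hF_sub).smul_measure
        (by simp)),
    integral_smul_measure, integral_smul_measure, integral_map (aemeasurable_pair_add hθ) hFs_add,
    integral_map (aemeasurable_pair_sub hθ) hFs_sub, smul_add]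
  simp

theorem isMartCoupling_muMartCoupling [InnerProductSpace ℝ E] (hid : Integrable (fun y => y) μ)
    (hθ : Integrable θ μ) :
    IsMartCoupling μ (muMart μ θ) (muMartCoupling μ θ) := by
  have hθm := hθ.aemeasurable
  refine ⟨⟨map_fst_muMartCoupling hθm, map_snd_muMartCoupling hθm⟩, fun B hB => ?_⟩
  have hF : Measurable fun q : E × E => B.indicator (fun _ => (1 : ℝ)) q.1 • q.2 :=
    ((measurable_const.indicator hB).comp measurable_fst).smul measurable_snd
  have hind (g : E → E) :
      (fun y => B.indicator (fun _ => (1 : ℝ)) y • g y) = B.indicator g := by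
    funext y
    by_cases hy : y ∈ B <;> simp [hy]
  have h_add : Integrable (fun y => B.indicator (fun _ => (1 : ℝ)) y • (y + θ y)) μ := by
    rw [hind (fun y => y + θ y)]
    exact (hid.add hθ).indicator hB
  have h_sub : Integrable (fun y => B.indicator (fun _ => (1 : ℝ)) y • (y - θ y)) μ := by
    rw [hind (fun y => y - θ y)]
    exact (hid.sub hθ).indicator hB
  -- Averaging `y + θ y` and `y - θ y` gives back `y`.
  rw [integral_muMartCoupling hθm hF h_add h_sub, ← integral_add h_add h_sub, ← integral_smul]
  congr 1
  funext y
  module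

end MuMartCoupling

section Moments

variable {α F : Type*} [MeasurableSpace α] [NormedAddCommGroup F] {ν : Measure α} {p : ℝ}

theorem lintegral_nnnorm_rpow_lt_top_of_memLp (hp : 0 < p) {g : α → F}
    (hg : MemLp g (ENNReal.ofReal p) ν) : ∫⁻ x, (‖g x‖₊ : ℝ≥0∞) ^ p ∂ν < ⊤ := by
  have h := (eLpNorm_lt_top_iff_lintegral_rpow_enorm_lt_top (by simpa using hp)
    ENNReal.ofReal_ne_top).mp hg.2
  rwa [ENNReal.toReal_ofReal hp.le] at h

theorem ofReal_lpnorm_eq_lintegral (hp : 0 < p) {μ : Measure E} {θ : E → E}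
    (hθ : MemLp θ (ENNReal.ofReal p) μ) :
    ENNReal.ofReal (lpnorm μ p θ) = (∫⁻ y, (‖θ y‖₊ : ℝ≥0∞) ^ p ∂μ) ^ (1 / p) := by
  have hint : Integrable (fun y => ‖θ y‖ ^ p) μ := by
    simpa [ENNReal.toReal_ofReal hp.le] using
      hθ.integrable_norm_rpow (by simpa using hp) ENNReal.ofReal_ne_top
  rw [lpnorm, ← ENNReal.ofReal_rpow_of_nonneg (integral_nonneg fun _ => by positivity)
    (by positivity), ofReal_integral_eq_lintegral_ofReal hint
    (Eventually.of_forall fun _ => by positivity)]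
  congr 1
  refine lintegral_congr fun y => ?_
  rw [← ENNReal.ofReal_rpow_of_nonneg (norm_nonneg _) hp.le, ofReal_norm]
  rfl

end Moments

section MuMart

variable [BorelSpace E] [SecondCountableTopology E] {μ : Measure E} {θ : E → E} {p : ℝ}

theorem memLp_id_of_mem_Pp (hp : 0 < p) (hμ : μ ∈ Pp p) :
    MemLp (fun y => y) (ENNReal.ofReal p) μ := by
  refine ⟨aestronglyMeasurable_id, ?_⟩
  rw [eLpNorm_lt_top_iff_lintegral_rpow_enorm_lt_top (by simpa using hp) ENNReal.ofReal_ne_top,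
    ENNReal.toReal_ofReal hp.le]
  exact hμ.2

theorem muMart_mem_Pp (hp : 0 < p) (hμ : μ ∈ Pp p) (hθ : MemLp θ (ENNReal.ofReal p) μ) :
    muMart μ θ ∈ Pp p := by
  have hθm := hθ.aestronglyMeasurable.aemeasurable
  have hid := memLp_id_of_mem_Pp hp hμ
  have : IsProbabilityMeasure (muMartCoupling μ θ) := by
    rw [← Measure.isProbabilityMeasure_map_iff measurable_fst.aemeasurable,
      map_fst_muMartCoupling hθm]
    exact hμ.1
  have hmeas : Measurable fun x : E => (‖x‖₊ : ℝ≥0∞) ^ p :=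
    measurable_nnnorm.coe_nnreal_ennreal.pow_const p
  rw [← map_snd_muMartCoupling hθm]
  refine ⟨Measure.isProbabilityMeasure_map measurable_snd.aemeasurable, ?_⟩
  rw [lintegral_map hmeas measurable_snd,
    lintegral_muMartCoupling (F := fun q => (‖q.2‖₊ : ℝ≥0∞) ^ p) hθm (hmeas.comp measurable_snd)]
  exact ENNReal.add_lt_top.mpr
    ⟨ENNReal.mul_lt_top (by simp) (lintegral_nnnorm_rpow_lt_top_of_memLp hp (hid.add hθ)),
      ENNReal.mul_lt_top (by simp) (lintegral_nnnorm_rpow_lt_top_of_memLp hp (hid.sub hθ))⟩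

theorem lintegral_nnnorm_sub_rpow_muMartCoupling (hθ : AEMeasurable θ μ) :
    ∫⁻ q, (‖q.2 - q.1‖₊ : ℝ≥0∞) ^ p ∂muMartCoupling μ θ = ∫⁻ y, (‖θ y‖₊ : ℝ≥0∞) ^ p ∂μ := by
  rw [lintegral_muMartCoupling (F := fun q => (‖q.2 - q.1‖₊ : ℝ≥0∞) ^ p) hθ
    ((measurable_snd.sub measurable_fst).nnnorm.coe_nnreal_ennreal.pow_const p)]
  simp only [add_sub_cancel_left, sub_sub_cancel_left, nnnorm_neg]
  rw [← add_mul, ENNReal.inv_two_add_inv_two, one_mul]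

variable [InnerProductSpace ℝ E]

theorem isMartCoupling_muMartCoupling_of_memLp (hp : 1 ≤ p) (hμ : μ ∈ Pp p)
    (hθ : MemLp θ (ENNReal.ofReal p) μ) :
    IsMartCoupling μ (muMart μ θ) (muMartCoupling μ θ) := by
  have := hμ.1
  have hp' : 1 ≤ ENNReal.ofReal p := ENNReal.one_le_ofReal.mpr hp
  exact isMartCoupling_muMartCoupling
    ((memLp_id_of_mem_Pp (by linarith) hμ).integrable hp') (hθ.integrable hp')

theorem muMart_mem_Mp (hp : 1 ≤ p) (hμ : μ ∈ Pp p) (hθ : MemLp θ (ENNReal.ofReal p) μ) :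
    muMart μ θ ∈ Mp p μ :=
  ⟨muMart_mem_Pp (by linarith) hμ hθ, _, isMartCoupling_muMartCoupling_of_memLp hp hμ hθ⟩

theorem WpMart_muMart_le (hp : 1 ≤ p) (hμ : μ ∈ Pp p) (hθ : MemLp θ (ENNReal.ofReal p) μ) :
    WpMart p μ (muMart μ θ) ≤ ENNReal.ofReal (lpnorm μ p θ) := by
  rw [ofReal_lpnorm_eq_lintegral (by linarith) hθ,
    ← lintegral_nnnorm_sub_rpow_muMartCoupling hθ.aestronglyMeasurable.aemeasurable]
  exact ENNReal.rpow_le_rpow (iInf₂_le _ (isMartCoupling_muMartCoupling_of_memLp hp hμ hθ))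
    (by positivity)

theorem WpMart_muMart_sq_le (hp : 1 ≤ p) (hμ : μ ∈ Pp p) (hθ : MemLp θ (ENNReal.ofReal p) μ) :
    WpMart p μ (muMart μ θ) ^ 2 ≤ ENNReal.ofReal (lpnorm μ p θ ^ 2) := by
  have hnonneg : 0 ≤ lpnorm μ p θ :=
    Real.rpow_nonneg (integral_nonneg fun _ => by positivity) _
  rw [ENNReal.ofReal_pow hnonneg]
  exact pow_le_pow_left₀ zero_le (WpMart_muMart_le hp hμ hθ) 2

end MuMart

theorem phih_le_phih {φ : ℝ → ℝ≥0∞} (hmono : MonotoneOn φ (Ici 0)) {h a b : ℝ} (hh : 0 ≤ h)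
    (ha : 0 ≤ a) (hab : a ≤ b) : phih φ h a ≤ phih φ h b :=
  mul_le_mul_right (hmono (div_nonneg ha hh) (div_nonneg (ha.trans hab) hh)
    (div_le_div_of_nonneg_right hab hh)) _

theorem IMartTheta_le_IMart [InnerProductSpace ℝ E] {μ : Measure E} {φ : ℝ → ℝ≥0∞} {p h : ℝ}
    {Θ : Set (E → E)} {f : E → ℝ} (hmono : MonotoneOn φ (Ici 0)) (hh : 0 ≤ h)
    (hΘ : ∀ θ ∈ Θ, muMart μ θ ∈ Mp p μ ∧
      WpMart p μ (muMart μ θ) ^ 2 ≤ ENNReal.ofReal (lpnorm μ p θ ^ 2)) :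
    IMartTheta μ φ p Θ h f ≤ IMart μ φ p h f := by
  refine iSup₂_le fun θ hθ => ?_
  obtain ⟨hmem, hW⟩ := hΘ θ hθ
  have hW' : (WpMart p μ (muMart μ θ)).toReal ^ 2 ≤ lpnorm μ p θ ^ 2 := by
    simpa [ENNReal.toReal_pow, ENNReal.toReal_ofReal (sq_nonneg _)] using
      ENNReal.toReal_mono ENNReal.ofReal_ne_top hW
  refine le_iSup₂_of_le (muMart μ θ) hmem (EReal.sub_le_sub le_rfl ?_)
  exact EReal.coe_ennreal_le_coe_ennreal_iff.mpr (phih_le_phih hmono hh (sq_nonneg _) hW')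

theorem stmt16_general (p : ℝ) (hp : 1 < p)
    (μ : Measure X) (hμ : μ ∈ Pp (X := X) p)
    (φ : ℝ → ℝ≥0∞) (hmono : MonotoneOn φ (Ici (0 : ℝ))) :
    (∀ θ : X → X, MemLp θ (ENNReal.ofReal p) μ →
      muMart μ θ ∈ Mp p μ ∧
      WpMart p μ (muMart μ θ) ^ 2 ≤ ENNReal.ofReal (lpnorm μ p θ ^ 2)) ∧
    ∀ Θ : Set (X → X), (∀ g ∈ Θ, MemLp g (ENNReal.ofReal p) μ) →
      ∀ h : ℝ, 0 < h → ∀ f : X → ℝ, MemLipP p f →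
        IMartTheta μ φ p Θ h f ≤ IMart μ φ p h f := by
  have hmuMart (θ : X → X) (hθ : MemLp θ (ENNReal.ofReal p) μ) :
      muMart μ θ ∈ Mp p μ ∧ WpMart p μ (muMart μ θ) ^ 2 ≤ ENNReal.ofReal (lpnorm μ p θ ^ 2) :=
    ⟨muMart_mem_Mp hp.le hμ hθ, WpMart_muMart_sq_le hp.le hμ hθ⟩
  exact ⟨hmuMart, fun Θ hΘ h hh _ _ =>
    IMartTheta_le_IMart hmono hh.le fun θ hθ => hmuMart θ (hΘ θ hθ)⟩

theorem stmt16 (p : ℝ) (hp : 1 < p)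
    (μ : Measure X) (hμ : μ ∈ Pp (X := X) p)
    (φ : ℝ → ℝ≥0∞) (hmono : MonotoneOn φ (Ici (0 : ℝ))) (hzero : φ 0 = 0)
    (hgrowth : 0 < liminf (fun v : ℝ => φ v / ENNReal.ofReal (v ^ (p / 2))) atTop) :
    (∀ θ : X → X, MemLp θ (ENNReal.ofReal p) μ →
      muMart μ θ ∈ Mp p μ ∧
      WpMart p μ (muMart μ θ) ^ 2 ≤ ENNReal.ofReal (lpnorm μ p θ ^ 2)) ∧
    ∀ Θ : Set (X → X), (∀ g ∈ Θ, MemLp g (ENNReal.ofReal p) μ) →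
      ∀ h : ℝ, 0 < h → ∀ f : X → ℝ, MemLipP p f →
        IMartTheta μ φ p Θ h f ≤ IMart μ φ p h f :=
  stmt16_general p hp μ hμ φ hmono
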